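/- arXiv:1210.6406 — 8 statements merged into one kernel-verified Lean document; each statement's English description precedes it below -/
import Mathlib

section
/- Let A be a power associative k-algebra over a field of characteristic 0 and α, β ∈ k. Then A with new multiplication x × y = α·xy + β·yx is again power associative. -/
/-- A bracketing of a product of copies of a single variable: a nonassociative
monomial in one variable. -/
inductive Bkt : Type
  | leaf : Bkt
  | node : Bkt → Bkt → Bkt

/-- The degree (number of factors) of a one-variable nonassociative monomial. -/
def Bkt.deg : Bkt → ℕ
  | .leaf => 1
  | .node u v => u.deg + v.deg

/-- Evaluation of a one-variable nonassociative monomial at `h`, using the binary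
operation `m` as the multiplication. -/
def Bkt.eval {A : Type*} (m : A → A → A) (h : A) : Bkt → A
  | .leaf => h
  | .node u v => m (u.eval m h) (v.eval m h)

/-- Canonical left-normed bracketing of degree `n+1`. -/
def Bkt.cb : ℕ → Bkt
  | 0 => .leaf
  | n + 1 => .node (Bkt.cb n) .leaf

lemma Bkt.cb_deg : ∀ n : ℕ, (Bkt.cb n).deg = n + 1
  | 0 => rfl
  | n + 1 => by simp [Bkt.cb, Bkt.deg, Bkt.cb_deg n]

lemma Bkt.deg_pos : ∀ u : Bkt, 1 ≤ u.deg
  | .leaf => le_refl 1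
  | .node u v => le_trans (Bkt.deg_pos u) (Nat.le_add_right _ _)

/-- If `A` is a power associative `k`-algebra over a field of characteristic `0`
(all bracketings of powers of a single element agree), then for `α, β ∈ k` the
algebra `A` with new multiplication `x × y = α·xy + β·yx` is again power
associative. -/
theorem stmt8 (k A : Type*) [Field k] [CharZero k] [NonUnitalNonAssocRing A]
    [Module k A] [SMulCommClass k A A] [IsScalarTower k A A]
    (hpa : ∀ u v : Bkt, u.deg = v.deg → ∀ h : A,
      u.eval (· * ·) h = v.eval (· * ·) h)
    (α β : k) (m : A → A → A)
    (hm : ∀ x y : A, m x y = α • (x * y) + β • (y * x)) :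
    ∀ u v : Bkt, u.deg = v.deg → ∀ h : A, u.eval m h = v.eval m h := by
  intro u v hdeg h
  -- Key: every bracketing of degree n evaluates (under m) to (α+β)^(n-1) • hⁿ.
  have key : ∀ w : Bkt,
      w.eval m h = ((α + β) ^ (w.deg - 1)) • ((Bkt.cb (w.deg - 1)).eval (· * ·) h) := by
    intro w
    induction w with
    | leaf => simp [Bkt.eval, Bkt.deg, Bkt.cb]
    | node u v ihu ihv =>
      have hu := u.deg_pos
      have hv := v.deg_pos
      have hxy : (Bkt.cb (u.deg - 1)).eval (· * ·) h * (Bkt.cb (v.deg - 1)).eval (· * ·) h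
          = (Bkt.cb (u.deg + v.deg - 1)).eval (· * ·) h := by
        have := hpa (.node (Bkt.cb (u.deg - 1)) (Bkt.cb (v.deg - 1)))
          (Bkt.cb (u.deg + v.deg - 1)) (by
            simp [Bkt.deg, Bkt.cb_deg]; omega) h
        simpa [Bkt.eval] using this
      have hyx : (Bkt.cb (v.deg - 1)).eval (· * ·) h * (Bkt.cb (u.deg - 1)).eval (· * ·) h
          = (Bkt.cb (u.deg + v.deg - 1)).eval (· * ·) h := by
        have := hpa (.node (Bkt.cb (v.deg - 1)) (Bkt.cb (u.deg - 1)))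
          (Bkt.cb (u.deg + v.deg - 1)) (by
            simp [Bkt.deg, Bkt.cb_deg]; omega) h
        simpa [Bkt.eval] using this
      show m (u.eval m h) (v.eval m h) = _
      rw [ihu, ihv, hm]
      rw [smul_mul_assoc, smul_mul_assoc, mul_smul_comm, mul_smul_comm, hxy, hyx]
      rw [smul_smul, smul_smul, smul_smul, smul_smul]
      rw [← add_smul]
      have hd : (Bkt.node u v).deg = u.deg + v.deg := rfl
      congr 1
      · obtain ⟨a, ha⟩ := Nat.exists_eq_succ_of_ne_zero (by omega : u.deg ≠ 0)
        obtain ⟨b, hb⟩ := Nat.exists_eq_succ_of_ne_zero (by omega : v.deg ≠ 0)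
        rw [hd, ha, hb]
        have he : a + 1 + (b + 1) - 1 = a + b + 1 := by omega
        rw [he]
        have hu1 : a + 1 - 1 = a := rfl
        have hv1 : b + 1 - 1 = b := rfl
        rw [hu1, hv1]
        ring
  rw [key u, key v, hdeg]
end

section
/- Let N be a nilpotent nonassociative k-algebra of index 3 (all products of 3 elements vanish under any bracketing). Fix γ ∈ k, φ ∈ Aut(k), and α, β ∈ k. Define operations: x ⊥ y = x + y + γ·xy + γ·yx, λ ∗ x = φ(λ)·x + γ·(φ(λ)² − φ(λ))·x², and x × y = α·xy + β·yx. Then (N, ⊥, ∗, ×) satisfies all k-algebra axioms: ⊥ is commutative and associative with identity 0, ∗ distributes over ⊥, (λμ) ∗ x = λ ∗ (μ ∗ x), (λ+μ) ∗ x = (λ∗x) ⊥ (μ∗x), × distributes over ⊥, and λ ∗ (x×y) = (λ∗x)×y = x×(λ∗y). -/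
/-- Let `N` be a nilpotent nonassociative `k`-algebra of index `3` (all products of
three elements vanish).  For `γ ∈ k`, `φ ∈ Aut(k)` and `α, β ∈ k`, the verbal
operations `x ⊥ y = x + y + γ·xy + γ·yx`, `λ ∗ x = φ(λ)·x + γ·(φ(λ)² − φ(λ))·x²`
and `x × y = α·xy + β·yx` satisfy all the `k`-algebra axioms. -/
theorem stmt11 (k N : Type*) [Field k] [CharZero k] [NonUnitalNonAssocRing N]
    [Module k N] [SMulCommClass k N N] [IsScalarTower k N N]
    (h3l : ∀ x y z : N, (x * y) * z = 0) (h3r : ∀ x y z : N, x * (y * z) = 0)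
    (γ α β : k) (φ : k ≃+* k)
    (perp : N → N → N) (ast : k → N → N) (times : N → N → N)
    (hperp : ∀ x y : N, perp x y = x + y + γ • (x * y) + γ • (y * x))
    (hast : ∀ (lam : k) (x : N),
      ast lam x = φ lam • x + (γ * ((φ lam) ^ 2 - φ lam)) • (x * x))
    (htimes : ∀ x y : N, times x y = α • (x * y) + β • (y * x)) :
    (∀ x y : N, perp x y = perp y x) ∧
    (∀ x y z : N, perp (perp x y) z = perp x (perp y z)) ∧
    (∀ x : N, perp x 0 = x) ∧
    (∀ x : N, perp 0 x = x) ∧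
    (∀ (lam : k) (x y : N), ast lam (perp x y) = perp (ast lam x) (ast lam y)) ∧
    (∀ (lam mu : k) (x : N), ast (lam * mu) x = ast lam (ast mu x)) ∧
    (∀ (lam mu : k) (x : N), ast (lam + mu) x = perp (ast lam x) (ast mu x)) ∧
    (∀ x y z : N, times (perp x y) z = perp (times x z) (times y z)) ∧
    (∀ x y z : N, times x (perp y z) = perp (times x y) (times x z)) ∧
    (∀ (lam : k) (x y : N),
      ast lam (times x y) = times (ast lam x) y ∧
      ast lam (times x y) = times x (ast lam y)) := by
  refine ⟨?_, ?_, ?_, ?_, ?_, ?_, ?_, ?_, ?_, ?_⟩ <;>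
    intros <;>
    simp only [hperp, hast, htimes, map_mul, map_add, mul_add, add_mul,
      smul_mul_assoc, mul_smul_comm, h3l, h3r, smul_zero, add_zero, zero_add,
      mul_zero, zero_mul, smul_add] <;>
    (try constructor) <;>
    match_scalars <;> ring
end

section
/- In a nilpotent algebra N with N³ = 0, for γ ∈ k and the verbal operations x ⊥ y = x + y + γ(xy + yx), λ ∗ x = λx + γ(λ²−λ)x², x × y = α·xy (α ∈ k*), the map c(f) = α⁻¹f + α⁻²γ f² satisfies c(f₁+f₂) = c(f₁) ⊥ c(f₂), c(λf) = λ ∗ c(f), and c(f₁f₂) = c(f₁) × c(f₂). -/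
/-- In a nilpotent `k`-algebra `N` with `N³ = 0`, for `γ ∈ k`, `α ∈ k*` and the
verbal operations `x ⊥ y = x + y + γ(xy + yx)`, `λ ∗ x = λx + γ(λ²−λ)x²`,
`x × y = α·xy`, the map `c(f) = α⁻¹f + α⁻²γf²` satisfies
`c(f₁+f₂) = c(f₁) ⊥ c(f₂)`, `c(λf) = λ ∗ c(f)` and `c(f₁f₂) = c(f₁) × c(f₂)`. -/
theorem stmt12 (k N : Type*) [Field k] [CharZero k] [NonUnitalNonAssocRing N]
    [Module k N] [SMulCommClass k N N] [IsScalarTower k N N]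
    (h3l : ∀ x y z : N, (x * y) * z = 0) (h3r : ∀ x y z : N, x * (y * z) = 0)
    (γ α : k) (hα : α ≠ 0)
    (perp : N → N → N) (ast : k → N → N) (times : N → N → N)
    (hperp : ∀ x y : N, perp x y = x + y + γ • (x * y) + γ • (y * x))
    (hast : ∀ (lam : k) (x : N),
      ast lam x = lam • x + (γ * (lam ^ 2 - lam)) • (x * x))
    (htimes : ∀ x y : N, times x y = α • (x * y))
    (c : N → N)
    (hc : ∀ f : N, c f = α⁻¹ • f + (α⁻¹ ^ 2 * γ) • (f * f)) :
    (∀ f₁ f₂ : N, c (f₁ + f₂) = perp (c f₁) (c f₂)) ∧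
    (∀ (lam : k) (f : N), c (lam • f) = ast lam (c f)) ∧
    (∀ f₁ f₂ : N, c (f₁ * f₂) = times (c f₁) (c f₂)) := by
  refine ⟨fun f₁ f₂ => ?_, fun lam f => ?_, fun f₁ f₂ => ?_⟩ <;>
  · simp only [hc, hperp, hast, htimes, mul_add, add_mul, smul_add, smul_smul,
      mul_smul_comm, smul_mul_assoc, h3l, h3r, smul_zero, add_zero, zero_add]
    try field_simp
    try module
end

section
/- Composition law in the nilpotent-of-index-3 case: for parameters (φ⁽¹⁾, γ⁽¹⁾, α₁₂⁽¹⁾, α₂₁⁽¹⁾) and (φ⁽²⁾, γ⁽²⁾, α₁₂⁽²⁾, α₂₁⁽²⁾), the composition σ⁽²⁾∘σ⁽¹⁾ of the corresponding substitution maps has parameters φ⁽³⁾ = φ⁽²⁾φ⁽¹⁾, γ⁽³⁾ = γ⁽²⁾ + φ⁽²⁾(γ⁽¹⁾)(α₁₂⁽²⁾ + α₂₁⁽²⁾), α₁₂⁽³⁾ = φ⁽²⁾(α₁₂⁽¹⁾)α₁₂⁽²⁾ + φ⁽²⁾(α₂₁⁽¹⁾)α₂₁⁽²⁾, α₂₁⁽³⁾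 = φ⁽²⁾(α₁₂⁽¹⁾)α₂₁⁽²⁾ + φ⁽²⁾(α₂₁⁽¹⁾)α₁₂⁽²⁾. -/
/-- Composition law in the nilpotent-of-index-3 case.  The substitution map with
parameters `(φ, γ, α₁₂, α₂₁)` sends `λx ↦ φ(λ)x + γ(φ(λ)²−φ(λ))x²`,
`x₁+x₂ ↦ x₁+x₂+γ(x₁x₂+x₂x₁)` and `x₁x₂ ↦ α₁₂x₁x₂+α₂₁x₂x₁`; applying the second map
to the image of the first (interpreting iterated expressions via the verbal
operations `⊥₂, ∗₂, ×₂` of the second parameter set) yields the substitution map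
with parameters `φ⁽³⁾ = φ⁽²⁾∘φ⁽¹⁾`, `γ⁽³⁾ = γ⁽²⁾ + φ⁽²⁾(γ⁽¹⁾)(α₁₂⁽²⁾+α₂₁⁽²⁾)`,
`α₁₂⁽³⁾ = φ⁽²⁾(α₁₂⁽¹⁾)α₁₂⁽²⁾ + φ⁽²⁾(α₂₁⁽¹⁾)α₂₁⁽²⁾`,
`α₂₁⁽³⁾ = φ⁽²⁾(α₁₂⁽¹⁾)α₂₁⁽²⁾ + φ⁽²⁾(α₂₁⁽¹⁾)α₁₂⁽²⁾`. -/
theorem stmt13 (k N : Type*) [Field k] [CharZero k] [NonUnitalNonAssocRing N]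
    [Module k N] [SMulCommClass k N N] [IsScalarTower k N N]
    (h3l : ∀ x y z : N, (x * y) * z = 0) (h3r : ∀ x y z : N, x * (y * z) = 0)
    (φ₁ φ₂ : k ≃+* k) (γ₁ γ₂ a₁ b₁ a₂ b₂ : k)
    (perp₂ : N → N → N) (ast₂ : k → N → N) (times₂ : N → N → N)
    (hperp₂ : ∀ x y : N, perp₂ x y = x + y + γ₂ • (x * y) + γ₂ • (y * x))
    (hast₂ : ∀ (lam : k) (x : N),
      ast₂ lam x = φ₂ lam • x + (γ₂ * ((φ₂ lam) ^ 2 - φ₂ lam)) • (x * x))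
    (htimes₂ : ∀ x y : N, times₂ x y = a₂ • (x * y) + b₂ • (y * x))
    (γ₃ a₃ b₃ : k)
    (hγ₃ : γ₃ = γ₂ + φ₂ γ₁ * (a₂ + b₂))
    (ha₃ : a₃ = φ₂ a₁ * a₂ + φ₂ b₁ * b₂)
    (hb₃ : b₃ = φ₂ a₁ * b₂ + φ₂ b₁ * a₂) :
    (∀ (lam : k) (x : N),
      perp₂ (ast₂ (φ₁ lam) x)
        (ast₂ (γ₁ * ((φ₁ lam) ^ 2 - φ₁ lam)) (times₂ x x)) =
      φ₂ (φ₁ lam) • x +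
        (γ₃ * ((φ₂ (φ₁ lam)) ^ 2 - φ₂ (φ₁ lam))) • (x * x)) ∧
    (∀ x₁ x₂ : N,
      perp₂ (perp₂ (perp₂ x₁ x₂) (ast₂ γ₁ (times₂ x₁ x₂)))
        (ast₂ γ₁ (times₂ x₂ x₁)) =
      x₁ + x₂ + γ₃ • (x₁ * x₂) + γ₃ • (x₂ * x₁)) ∧
    (∀ x₁ x₂ : N,
      perp₂ (ast₂ a₁ (times₂ x₁ x₂)) (ast₂ b₁ (times₂ x₂ x₁)) =
      a₃ • (x₁ * x₂) + b₃ • (x₂ * x₁)) := by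
  subst hγ₃ ha₃ hb₃
  refine ⟨fun lam x => ?_, fun x₁ x₂ => ?_, fun x₁ x₂ => ?_⟩ <;>
  · simp only [hperp₂, hast₂, htimes₂, map_mul, map_sub, map_pow, map_add,
      mul_add, add_mul, smul_add, mul_smul_comm, smul_mul_assoc, smul_smul,
      h3l, h3r, smul_zero, add_zero, zero_add, sub_smul, add_smul, mul_sub, sub_mul]
    module
end

section
/- Let N be a nilpotent nonassociative k-algebra with N⁴ = 0 (all products of 4 factors vanish). Given α ∈ k and γ ∈ k, define x × y = α·xy + β·yx − αγ(x²y) − βγ(yx²) − βγ(y²x) − αγ(xy²) and x ⊥ y = x + y + γ(xy + yx) + higher-degree corrections as in formula (add_4) with parameters γ, γ₁₍₂,₂₎, γ₍₁,₁₎₂. Then × distributes over ⊥ on both sides. -/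
/-- Let `N` be a nilpotent nonassociative `k`-algebra with `N⁴ = 0`.  With
`x × y = α·xy + β·yx − αγ·(x²)y − βγ·y(x²) − βγ·(y²)x − αγ·x(y²)` and
`x ⊥ y = x + y + γ(xy+yx) +` the degree-3 corrections of formula (add_4) with
parameters `γ, γ₁₍₂,₂₎, γ₍₁,₁₎₂`, the operation `×` distributes over `⊥` on both
sides. -/
theorem stmt15 (k N : Type*) [Field k] [CharZero k] [NonUnitalNonAssocRing N]
    [Module k N] [SMulCommClass k N N] [IsScalarTower k N N]
    (h4 : ∀ a b c d : N,
      ((a * b) * c) * d = 0 ∧ (a * (b * c)) * d = 0 ∧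
      (a * b) * (c * d) = 0 ∧ a * ((b * c) * d) = 0 ∧ a * (b * (c * d)) = 0)
    (α β γ g1 g2 : k)
    (times perp : N → N → N)
    (htimes : ∀ x y : N, times x y =
      α • (x * y) + β • (y * x) - (α * γ) • ((x * x) * y) -
        (β * γ) • (y * (x * x)) - (β * γ) • ((y * y) * x) -
        (α * γ) • (x * (y * y)))
    (hperp : ∀ x y : N, perp x y =
      x + y + γ • (x * y) + γ • (y * x) +
        g2 • ((x * x) * y) +
        (γ ^ 2 + g2) • ((x * y) * y + (x * y) * x + (y * x) * x + (y * x) * y) +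
        g2 • ((y * y) * x) +
        g1 • (x * (y * y)) + g1 • (y * (x * x)) +
        (γ ^ 2 + g1) •
          (x * (x * y) + x * (y * x) + y * (y * x) + y * (x * y))) :
    (∀ x y z : N, times (perp x y) z = perp (times x z) (times y z)) ∧
    (∀ x y z : N, times x (perp y z) = perp (times x y) (times x z)) := by
  have h1 : ∀ a b c d : N, ((a * b) * c) * d = 0 := fun a b c d => (h4 a b c d).1
  have h2 : ∀ a b c d : N, (a * (b * c)) * d = 0 := fun a b c d => (h4 a b c d).2.1
  have h3 : ∀ a b c d : N, (a * b) * (c * d) = 0 := fun a b c d => (h4 a b c d).2.2.1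
  have h5 : ∀ a b c d : N, a * ((b * c) * d) = 0 := fun a b c d => (h4 a b c d).2.2.2.1
  have h6 : ∀ a b c d : N, a * (b * (c * d)) = 0 := fun a b c d => (h4 a b c d).2.2.2.2
  constructor <;> intro x y z <;>
  · simp only [htimes, hperp, mul_add, add_mul, sub_mul, mul_sub, smul_add, smul_sub,
      smul_mul_assoc, mul_smul_comm, smul_smul, h1, h2, h3, h5, h6,
      smul_zero, mul_zero, zero_mul, add_zero, zero_add, sub_zero, zero_sub, neg_zero]
    module
end

section
/- In a nilpotent algebra with N⁴ = 0, the verbal addition x ⊥ y = x + y + γ(xy+yx) + r(x,y), where r(x,y) is the degree-3 correction of formula (add_4) with parameters γ, γ₁₍₂,₂₎, γ₍₁,₁₎₂ ∈ k, is commutative and associative with neutral element 0. -/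
/-- In a nilpotent `k`-algebra `N` with `N⁴ = 0`, the verbal addition
`x ⊥ y = x + y + γ(xy+yx) + r(x,y)`, where `r(x,y)` is the degree-3 correction of
formula (add_4) with parameters `γ, γ₁₍₂,₂₎, γ₍₁,₁₎₂ ∈ k`, is commutative and
associative with neutral element `0`. -/
theorem stmt16 (k N : Type*) [Field k] [CharZero k] [NonUnitalNonAssocRing N]
    [Module k N] [SMulCommClass k N N] [IsScalarTower k N N]
    (h4 : ∀ a b c d : N,
      ((a * b) * c) * d = 0 ∧ (a * (b * c)) * d = 0 ∧
      (a * b) * (c * d) = 0 ∧ a * ((b * c) * d) = 0 ∧ a * (b * (c * d)) = 0)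
    (γ g1 g2 : k)
    (perp : N → N → N)
    (hperp : ∀ x y : N, perp x y =
      x + y + γ • (x * y) + γ • (y * x) +
        g2 • ((x * x) * y + (y * y) * x) +
        (γ ^ 2 + g2) • ((x * y) * x + (x * y) * y + (y * x) * x + (y * x) * y) +
        g1 • (x * (y * y) + y * (x * x)) +
        (γ ^ 2 + g1) •
          (x * (x * y) + x * (y * x) + y * (y * x) + y * (x * y))) :
    (∀ x y : N, perp x y = perp y x) ∧
    (∀ x y z : N, perp (perp x y) z = perp x (perp y z)) ∧
    (∀ x : N, perp x 0 = x) ∧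
    (∀ x : N, perp 0 x = x) := by
  have h1 : ∀ a b c d : N, ((a * b) * c) * d = 0 := fun a b c d => (h4 a b c d).1
  have h2 : ∀ a b c d : N, (a * (b * c)) * d = 0 := fun a b c d => (h4 a b c d).2.1
  have h3 : ∀ a b c d : N, (a * b) * (c * d) = 0 := fun a b c d => (h4 a b c d).2.2.1
  have h5 : ∀ a b c d : N, a * ((b * c) * d) = 0 := fun a b c d => (h4 a b c d).2.2.2.1
  have h6 : ∀ a b c d : N, a * (b * (c * d)) = 0 := fun a b c d => (h4 a b c d).2.2.2.2
  refine ⟨fun x y => ?_, fun x y z => ?_, fun x => ?_, fun x => ?_⟩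
  · rw [hperp, hperp]; abel_nf
  · rw [hperp, hperp, hperp, hperp]
    simp only [mul_add, add_mul, smul_mul_assoc, mul_smul_comm, h1, h2, h3, h5, h6,
      smul_zero, add_zero, zero_add]
    module
  · rw [hperp]; simp
  · rw [hperp]; simp
end

section
/- In a nilpotent algebra with N⁴ = 0, define λ ∗ h = φ(λ)h + γ(φ(λ)²−φ(λ))h² + (γ²(φ(λ)³−φ(λ)²)+γ₁₍₂,₂₎(φ(λ)³−φ(λ)))·h(h²) + (γ²(φ(λ)³−φ(λ)²)+γ₍₁,₁₎₂(φ(λ)³−φ(λ)))·(h²)h, where φ ∈ Aut(k). Then (μλ) ∗ h = μ ∗ (λ ∗ h) for all μ, λ ∈ k and h ∈ N. -/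
/-- In a nilpotent `k`-algebra `N` with `N⁴ = 0`, the verbal scalar action
`λ ∗ h = φ(λ)h + γ(φ(λ)²−φ(λ))h² + (γ²(φ(λ)³−φ(λ)²)+γ₁₍₂,₂₎(φ(λ)³−φ(λ)))·h(h²)
+ (γ²(φ(λ)³−φ(λ)²)+γ₍₁,₁₎₂(φ(λ)³−φ(λ)))·(h²)h`, with `φ ∈ Aut(k)`, satisfies
`(μλ) ∗ h = μ ∗ (λ ∗ h)` for all `μ, λ ∈ k` and `h ∈ N`. -/
theorem stmt17 (k N : Type*) [Field k] [CharZero k] [NonUnitalNonAssocRing N]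
    [Module k N] [SMulCommClass k N N] [IsScalarTower k N N]
    (h4 : ∀ a b c d : N,
      ((a * b) * c) * d = 0 ∧ (a * (b * c)) * d = 0 ∧
      (a * b) * (c * d) = 0 ∧ a * ((b * c) * d) = 0 ∧ a * (b * (c * d)) = 0)
    (φ : k ≃+* k) (γ g1 g2 : k)
    (ast : k → N → N)
    (hast : ∀ (lam : k) (h : N), ast lam h =
      φ lam • h + (γ * ((φ lam) ^ 2 - φ lam)) • (h * h) +
        (γ ^ 2 * ((φ lam) ^ 3 - (φ lam) ^ 2) + g1 * ((φ lam) ^ 3 - φ lam)) •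
          (h * (h * h)) +
        (γ ^ 2 * ((φ lam) ^ 3 - (φ lam) ^ 2) + g2 * ((φ lam) ^ 3 - φ lam)) •
          ((h * h) * h)) :
    ∀ (mu lam : k) (h : N), ast (mu * lam) h = ast mu (ast lam h) := by
  intro mu lam h
  have z1 : ∀ a b c d : N, ((a * b) * c) * d = 0 := fun a b c d => (h4 a b c d).1
  have z2 : ∀ a b c d : N, (a * (b * c)) * d = 0 := fun a b c d => (h4 a b c d).2.1
  have z3 : ∀ a b c d : N, (a * b) * (c * d) = 0 := fun a b c d => (h4 a b c d).2.2.1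
  have z4 : ∀ a b c d : N, a * ((b * c) * d) = 0 := fun a b c d => (h4 a b c d).2.2.2.1
  have z5 : ∀ a b c d : N, a * (b * (c * d)) = 0 := fun a b c d => (h4 a b c d).2.2.2.2
  rw [hast, hast, hast]
  simp only [mul_add, add_mul, smul_mul_assoc, mul_smul_comm, smul_smul, z1, z2, z3, z4, z5,
    smul_zero, add_zero, zero_add, smul_add, map_mul]
  match_scalars <;> ring
end

section
/- In a nilpotent algebra with N⁴ = 0, for α ∈ k*, γ, γ₁₍₂,₂₎, γ₍₁,₁₎₂ ∈ k, the map c(f) = α⁻¹f + α⁻²γ f² + α⁻³(γ²+γ₁₍₂,₂₎)·f(f²) + α⁻³(γ²+γ₍₁,₁₎₂)·(f²)f satisfies c(f₁f₂) = c(f₁) × c(f₂), where x × y = α·xy − αγ·x²y − αγ·xy². -/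
/-- In a nilpotent `k`-algebra `N` with `N⁴ = 0`, for `α ∈ k*` and parameters
`γ, γ₁₍₂,₂₎, γ₍₁,₁₎₂ ∈ k`, the map
`c(f) = α⁻¹f + α⁻²γf² + α⁻³(γ²+γ₁₍₂,₂₎)·f(f²) + α⁻³(γ²+γ₍₁,₁₎₂)·(f²)f`
satisfies `c(f₁f₂) = c(f₁) × c(f₂)`, where `x × y = α·xy − αγ·(x²)y − αγ·x(y²)`. -/
theorem stmt18 (k N : Type*) [Field k] [CharZero k] [NonUnitalNonAssocRing N]
    [Module k N] [SMulCommClass k N N] [IsScalarTower k N N]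
    (h4 : ∀ a b c d : N,
      ((a * b) * c) * d = 0 ∧ (a * (b * c)) * d = 0 ∧
      (a * b) * (c * d) = 0 ∧ a * ((b * c) * d) = 0 ∧ a * (b * (c * d)) = 0)
    (α γ g1 g2 : k) (hα : α ≠ 0)
    (times : N → N → N)
    (htimes : ∀ x y : N, times x y =
      α • (x * y) - (α * γ) • ((x * x) * y) - (α * γ) • (x * (y * y)))
    (c : N → N)
    (hc : ∀ f : N, c f =
      α⁻¹ • f + (α⁻¹ ^ 2 * γ) • (f * f) +
        (α⁻¹ ^ 3 * (γ ^ 2 + g1)) • (f * (f * f)) +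
        (α⁻¹ ^ 3 * (γ ^ 2 + g2)) • ((f * f) * f)) :
    ∀ f₁ f₂ : N, c (f₁ * f₂) = times (c f₁) (c f₂) := by
  intro f₁ f₂
  have H1 : ∀ a b c d : N, ((a * b) * c) * d = 0 := fun a b c d => (h4 a b c d).1
  have H2 : ∀ a b c d : N, (a * (b * c)) * d = 0 := fun a b c d => (h4 a b c d).2.1
  have H3 : ∀ a b c d : N, (a * b) * (c * d) = 0 := fun a b c d => (h4 a b c d).2.2.1
  have H4 : ∀ a b c d : N, a * ((b * c) * d) = 0 := fun a b c d => (h4 a b c d).2.2.2.1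
  have H5 : ∀ a b c d : N, a * (b * (c * d)) = 0 := fun a b c d => (h4 a b c d).2.2.2.2
  rw [htimes, hc, hc, hc]
  simp only [mul_add, add_mul, smul_mul_assoc, mul_smul_comm, smul_smul,
    H1, H2, H3, H4, H5, smul_zero, zero_mul, mul_zero, add_zero, zero_add, smul_add,
    sub_eq_add_neg, neg_add, neg_neg, smul_neg]
  match_scalars <;> field_simp <;> ring
end
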